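/- Let X, Y, Z be discrete random variables with finite alphabets and all relevant probabilities positive, and q ≠ 1. Then I_q(X;Y,Z) = I_q(X;Z) + I_q(X;Y|Z) + (1-q)·∑_{x,y,z} p(x,y,z)·ln_q(p(x,z)/(p(x)p(z)))·ln_q(p(x,y|z)/(p(x|z)p(y|z))). -/
import Mathlib

noncomputable def lnq (q t : ℝ) : ℝ := (t ^ (1 - q) - 1) / (1 - q)

lemma lnq_mul (q : ℝ) (hq1 : q ≠ 1) {a b : ℝ} (ha : 0 < a) (hb : 0 < b) :
    lnq q (a * b) = lnq q a + lnq q b + (1 - q) * lnq q a * lnq q b := by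
  have h : (1 : ℝ) - q ≠ 0 := sub_ne_zero.mpr (Ne.symm hq1)
  unfold lnq
  rw [Real.mul_rpow ha.le hb.le]
  field_simp
  ring

section
variable {α β γ : Type*} [Fintype α] [Fintype β] [Fintype γ]

noncomputable def mX (p : α → β → γ → ℝ) (x : α) : ℝ := ∑ y, ∑ z, p x y z
noncomputable def mZ (p : α → β → γ → ℝ) (z : γ) : ℝ := ∑ x, ∑ y, p x y z
noncomputable def mXZ (p : α → β → γ → ℝ) (x : α) (z : γ) : ℝ := ∑ y, p x y z
noncomputable def mYZ (p : α → β → γ → ℝ) (y : β) (z : γ) : ℝ := ∑ x, p x y z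

theorem q_mutual_information_decomposition (q : ℝ) (hq1 : q ≠ 1)
    (p : α → β → γ → ℝ) (hp0 : ∀ x y z, 0 < p x y z)
    (hp1 : ∑ x, ∑ y, ∑ z, p x y z = 1) :
    (∑ x, ∑ y, ∑ z, p x y z * lnq q (p x y z / (mX p x * mYZ p y z))) =
      (∑ x, ∑ y, ∑ z, p x y z * lnq q (mXZ p x z / (mX p x * mZ p z))) +
      (∑ x, ∑ y, ∑ z, p x y z *
        lnq q ((p x y z / mZ p z) / ((mXZ p x z / mZ p z) * (mYZ p y z / mZ p z)))) +
      (1 - q) * ∑ x, ∑ y, ∑ z, p x y z *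
        lnq q (mXZ p x z / (mX p x * mZ p z)) *
        lnq q ((p x y z / mZ p z) / ((mXZ p x z / mZ p z) * (mYZ p y z / mZ p z))) := by
  have key : ∀ x y z, p x y z * lnq q (p x y z / (mX p x * mYZ p y z)) =
      p x y z * lnq q (mXZ p x z / (mX p x * mZ p z)) +
      p x y z * lnq q ((p x y z / mZ p z) / ((mXZ p x z / mZ p z) * (mYZ p y z / mZ p z))) +
      (1 - q) * (p x y z *
        lnq q (mXZ p x z / (mX p x * mZ p z)) *
        lnq q ((p x y z / mZ p z) / ((mXZ p x z / mZ p z) * (mYZ p y z / mZ p z)))) := by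
    intro x y z
    have hne : (Finset.univ : Finset β).Nonempty := ⟨y, Finset.mem_univ y⟩
    have hneγ : (Finset.univ : Finset γ).Nonempty := ⟨z, Finset.mem_univ z⟩
    have hneα : (Finset.univ : Finset α).Nonempty := ⟨x, Finset.mem_univ x⟩
    have hX : 0 < mX p x := Finset.sum_pos (fun y _ => Finset.sum_pos (fun z _ => hp0 x y z) hneγ) hne
    have hZ : 0 < mZ p z := Finset.sum_pos (fun x _ => Finset.sum_pos (fun y _ => hp0 x y z) hne) hneα
    have hXZ : 0 < mXZ p x z := Finset.sum_pos (fun y _ => hp0 x y z) hne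
    have hYZ : 0 < mYZ p y z := Finset.sum_pos (fun x _ => hp0 x y z) hneα
    have ha : (0:ℝ) < mXZ p x z / (mX p x * mZ p z) := by positivity
    have hb : (0:ℝ) < (p x y z / mZ p z) / ((mXZ p x z / mZ p z) * (mYZ p y z / mZ p z)) := by
      have := hp0 x y z; positivity
    have hfact : p x y z / (mX p x * mYZ p y z) =
        (mXZ p x z / (mX p x * mZ p z)) *
        ((p x y z / mZ p z) / ((mXZ p x z / mZ p z) * (mYZ p y z / mZ p z))) := by
      field_simp
    rw [hfact, lnq_mul q hq1 ha hb]
    ring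
  simp only [key, Finset.sum_add_distrib, Finset.mul_sum]
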